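/- arXiv:2501.02644 — 3 statements merged into one kernel-verified Lean document; each statement's English description precedes it below -/
import Mathlib

section
/- Let N ≥ 1, d ≥ 1 and let s₀, …, s_{d+1} ∈ ℝ^N. Assume the columns of ΔS are linearly independent (so that ΔSᵀΔS and (Δ²S)ᵀ(Δ²S) are invertible). Define the generalized residual r̃ = Δs₀ − Δ²S ((Δ²S)ᵀ Δ²S)⁻¹ (Δ²S)ᵀ Δs₀. Then ‖r̃‖₂² = 1 / (eᵀ (ΔSᵀΔS)⁻¹ e), where e = (1,…,1)ᵀ ∈ ℝ^{d+1}. -/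
open Matrix Finset

/-- single-indicator sum over `Fin n` with a `val` condition. -/
lemma sum_ind_val {n : ℕ} (f : Fin n → ℝ) (k : ℕ) (hk : k < n) :
    ∑ i : Fin n, (if i.val = k then f i else 0) = f ⟨k, hk⟩ := by
  rw [Finset.sum_eq_single ⟨k, hk⟩]
  · simp
  · intro b _ hb
    rw [if_neg]
    intro h; exact hb (Fin.ext h)
  · simp

lemma sum_ind_val_zero {n : ℕ} (f : Fin n → ℝ) (k : ℕ) (hk : ¬ k < n) :
    ∑ i : Fin n, (if i.val = k then f i else 0) = 0 := by
  apply Finset.sum_eq_zero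
  intro i _
  rw [if_neg]
  intro h; exact hk (h ▸ i.isLt)

/-- The `(d+1) × d` forward-difference matrix. -/
def Dmat (d : ℕ) : Matrix (Fin (d + 1)) (Fin d) ℝ :=
  Matrix.of fun i j => (if i.val = j.val + 1 then 1 else 0) - (if i.val = j.val then 1 else 0)

lemma Dmat_mulVec {d : ℕ} (y : Fin d → ℝ) (i : Fin (d + 1)) :
    (Dmat d *ᵥ y) i =
      (if h : 0 < i.val then y ⟨i.val - 1, by omega⟩ else 0) -
        (if h : i.val < d then y ⟨i.val, h⟩ else 0) := by
  have : (Dmat d *ᵥ y) i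
      = ∑ j : Fin d, ((if j.val = i.val - 1 ∧ 0 < i.val then y j else 0)
          - (if j.val = i.val then y j else 0)) := by
    simp only [Matrix.mulVec, dotProduct]
    apply Finset.sum_congr rfl
    intro j _
    simp only [Dmat, Matrix.of_apply, sub_mul, ite_mul, one_mul, zero_mul]
    congr 1
    · congr 1
      simp only [eq_iff_iff]
      omega
    · congr 1
      simp only [eq_iff_iff]
      omega
  rw [this, Finset.sum_sub_distrib]
  congr 1
  · by_cases h : 0 < i.val
    · rw [dif_pos h]
      have hlt : i.val - 1 < d := by omega
      rw [← sum_ind_val y _ hlt]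
      apply Finset.sum_congr rfl
      intro j _
      congr 1
      simp only [eq_iff_iff]
      omega
    · rw [dif_neg h]
      apply Finset.sum_eq_zero
      intro j _
      rw [if_neg]
      omega
  · by_cases h : i.val < d
    · rw [dif_pos h, ← sum_ind_val y _ h]
    · rw [dif_neg h, sum_ind_val_zero y _ h]

lemma Dmat_inj {d : ℕ} (x : Fin d → ℝ) (hx : Dmat d *ᵥ x = 0) : x = 0 := by
  have key : ∀ k : ℕ, ∀ h : k < d, x ⟨k, h⟩ = 0 := by
    intro k
    induction k with
    | zero =>
      intro h
      have h0 := congrFun hx ⟨0, by omega⟩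
      rw [Dmat_mulVec] at h0
      simp only [Pi.zero_apply] at h0
      rw [dif_neg (by simp), dif_pos h] at h0
      linarith [h0]
    | succ n ih =>
      intro h
      have h0 := congrFun hx ⟨n + 1, by omega⟩
      rw [Dmat_mulVec] at h0
      simp only [Pi.zero_apply] at h0
      rw [dif_pos (by simp), dif_pos h] at h0
      have := ih (by omega)
      simp only [Nat.add_sub_cancel] at h0
      rw [this] at h0
      linarith [h0]
  ext j
  exact key j.val j.isLt

lemma Dmat_surj {d : ℕ} (hd : 0 < d) (v : Fin (d + 1) → ℝ) (hv : ∑ i, v i = 0) :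
    ∃ c : Fin d → ℝ, Dmat d *ᵥ c = v := by
  set g : ℕ → ℝ := fun i => if h : i < d + 1 then v ⟨i, h⟩ else 0 with hg
  refine ⟨fun j => -∑ i ∈ Finset.range (j.val + 1), g i, ?_⟩
  have hsum : ∑ i ∈ Finset.range (d + 1), g i = 0 := by
    rw [← hv, ← Fin.sum_univ_eq_sum_range]
    apply Finset.sum_congr rfl
    intro i _
    simp [hg]
    intro h; have := i.isLt; omega
  ext i
  rw [Dmat_mulVec]
  rcases Nat.eq_zero_or_pos i.val with h0 | h0
  · rw [dif_neg (by omega), dif_pos (by omega)]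
    simp only [h0, zero_add, Finset.sum_range_one, zero_sub, neg_neg]
    have : g 0 = v i := by
      rw [hg]; simp only [dif_pos (by omega : 0 < d + 1)]
      congr 1
      exact Fin.ext h0.symm
    rw [this]
  · rw [dif_pos h0]
    by_cases hlt : i.val < d
    · rw [dif_pos hlt]
      have : i.val - 1 + 1 = i.val := by omega
      rw [this, Finset.sum_range_succ]
      have : g i.val = v i := by
        rw [hg]; simp only [dif_pos i.isLt]
      rw [← this]; ring
    · rw [dif_neg hlt]
      have hival : i.val = d := by omega
      have : i.val - 1 + 1 = d := by omega
      rw [this]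
      have h2 : ∑ i ∈ Finset.range (d + 1), g i = ∑ i ∈ Finset.range d, g i + g d :=
        Finset.sum_range_succ g d
      have : g d = v i := by
        rw [hg]; simp only [dif_pos (by omega : d < d + 1)]
        congr 1
        exact Fin.ext hival.symm
      rw [hsum] at h2
      rw [← this]
      linarith [h2]

lemma Dmat_transpose_one {d : ℕ} : (Dmat d)ᵀ *ᵥ (fun _ => (1 : ℝ)) = 0 := by
  ext j
  simp only [Matrix.mulVec, dotProduct, Matrix.transpose_apply, Pi.zero_apply, mul_one,
    Dmat, Matrix.of_apply]
  rw [Finset.sum_sub_distrib]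
  rw [sum_ind_val (fun _ => (1:ℝ)) (j.val + 1) (by omega),
    sum_ind_val (fun _ => (1:ℝ)) j.val (by omega)]
  ring

lemma posDef_transpose_mul_self {m n : ℕ} (M : Matrix (Fin m) (Fin n) ℝ)
    (hM : ∀ x, M *ᵥ x = 0 → x = 0) : (Mᵀ * M).PosDef := by
  rw [Matrix.posDef_iff_dotProduct_mulVec]
  constructor
  · simpa [Matrix.conjTranspose_eq_transpose_of_trivial] using Matrix.isHermitian_conjTranspose_mul_self M
  · intro x hx
    have h1 : star x ⬝ᵥ (Mᵀ * M) *ᵥ x = (M *ᵥ x) ⬝ᵥ (M *ᵥ x) := by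
      rw [star_trivial, ← Matrix.mulVec_mulVec, Matrix.dotProduct_mulVec,
        Matrix.vecMul_transpose]
    rw [h1]
    have h2 : M *ᵥ x ≠ 0 := fun h => hx (hM x h)
    have h3 : (0:ℝ) ≤ (M *ᵥ x) ⬝ᵥ (M *ᵥ x) :=
      Finset.sum_nonneg fun i _ => mul_self_nonneg _
    rcases h3.lt_or_eq with h | h
    · exact h
    · exact absurd ((dotProduct_self_eq_zero).mp h.symm) h2

/-- First forward differences `Δsⱼ = s_{j+1} − sⱼ` (for `0 ≤ j ≤ d`) of a finite sequence
of vectors `s₀, …, s_{d+1}` in `ℝ^N`. -/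
def forwardDiff {N d : ℕ} (s : Fin (d + 2) → Fin N → ℝ) (j : Fin (d + 1)) : Fin N → ℝ :=
  fun n => s j.succ n - s j.castSucc n

/-- `ΔS`: the `N × (d+1)` matrix whose columns are `Δs₀, …, Δs_d`. -/
def DS {N d : ℕ} (s : Fin (d + 2) → Fin N → ℝ) : Matrix (Fin N) (Fin (d + 1)) ℝ :=
  Matrix.of fun n j => forwardDiff s j n

/-- `Δ²S`: the `N × d` matrix whose columns are the second forward differences
`Δ²s₀, …, Δ²s_{d−1}`, where `Δ²sⱼ = Δs_{j+1} − Δsⱼ`. -/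
def D2S {N d : ℕ} (s : Fin (d + 2) → Fin N → ℝ) : Matrix (Fin N) (Fin d) ℝ :=
  Matrix.of fun n j => forwardDiff s j.succ n - forwardDiff s j.castSucc n

lemma D2S_eq {N d : ℕ} (s : Fin (d + 2) → Fin N → ℝ) : D2S s = DS s * Dmat d := by
  ext n j
  have h : (DS s * Dmat d) n j =
      ∑ i : Fin (d + 1), ((if i.val = j.val + 1 then DS s n i else 0) -
        (if i.val = j.val then DS s n i else 0)) := by
    simp only [Matrix.mul_apply, Dmat, Matrix.of_apply]
    apply Finset.sum_congr rfl
    intro i _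
    rw [mul_sub, mul_ite, mul_one, mul_zero, mul_ite, mul_one, mul_zero]
  rw [h, Finset.sum_sub_distrib, sum_ind_val _ _ (by omega), sum_ind_val _ _ (by omega)]
  simp only [D2S, DS, Matrix.of_apply]
  congr 1

/-- If the columns of `ΔS` are linearly independent, then the generalized residual
`r̃ = Δs₀ − Δ²S ((Δ²S)ᵀ Δ²S)⁻¹ (Δ²S)ᵀ Δs₀` satisfies
`‖r̃‖₂² = 1 / (eᵀ (ΔSᵀ ΔS)⁻¹ e)` where `e = (1,…,1)ᵀ`. -/
theorem rre_generalized_residual_norm (N d : ℕ) (hN : 1 ≤ N) (hd : 1 ≤ d)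
    (s : Fin (d + 2) → Fin N → ℝ)
    (hfull : LinearIndependent ℝ (DS s)ᵀ)
    (r : Fin N → ℝ)
    (hr : r = forwardDiff s 0 -
      D2S s *ᵥ (((D2S s)ᵀ * D2S s)⁻¹ *ᵥ ((D2S s)ᵀ *ᵥ forwardDiff s 0))) :
    ‖(EuclideanSpace.equiv (Fin N) ℝ).symm r‖ ^ 2 =
      1 / ((fun _ => (1 : ℝ)) ⬝ᵥ (((DS s)ᵀ * DS s)⁻¹ *ᵥ fun _ => (1 : ℝ))) := by
  classical
  set A := DS s with hA
  set B := D2S s with hB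
  have hBD : B = A * Dmat d := D2S_eq s
  -- injectivity facts
  have hAinj : Function.Injective (A.mulVec) := Matrix.mulVec_injective_iff.mpr hfull
  have hA0 : ∀ x, A *ᵥ x = 0 → x = 0 := by
    intro x hx
    apply hAinj
    rw [hx, Matrix.mulVec_zero]
  have hB0 : ∀ x, B *ᵥ x = 0 → x = 0 := by
    intro x hx
    rw [hBD, ← Matrix.mulVec_mulVec] at hx
    exact Dmat_inj x (hA0 _ hx)
  -- positive definiteness of the Gram matrices
  have hG : (Aᵀ * A).PosDef := posDef_transpose_mul_self A hA0
  have hM : (Bᵀ * B).PosDef := posDef_transpose_mul_self B hB0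
  set G := Aᵀ * A with hGdef
  set M := Bᵀ * B with hMdef
  have hGdet : IsUnit G.det := (Matrix.isUnit_iff_isUnit_det G).mp hG.isUnit
  have hMdet : IsUnit M.det := (Matrix.isUnit_iff_isUnit_det M).mp hM.isUnit
  set e : Fin (d + 1) → ℝ := fun _ => 1 with he
  set w : Fin (d + 1) → ℝ := G⁻¹ *ᵥ e with hw
  have hGw : G *ᵥ w = e := by
    rw [hw, Matrix.mulVec_mulVec, Matrix.mul_nonsing_inv _ hGdet, Matrix.one_mulVec]
  set β : ℝ := e ⬝ᵥ w with hβdef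
  have hβ : 0 < β := by
    have hGinv : (G⁻¹).PosDef := hG.inv
    have he0 : e ≠ 0 := by
      intro h
      have := congrFun h ⟨0, by omega⟩
      simp [he] at this
    have := hGinv.dotProduct_mulVec_pos he0
    rwa [star_trivial] at this
  set α : ℝ := β⁻¹ with hα
  set u : Fin N → ℝ := forwardDiff s 0 with hu
  have huA : u = A *ᵥ Pi.single 0 1 := by
    ext n
    rw [Matrix.mulVec_single]
    simp [hu, hA, DS]
  -- the (d+1)-vector v and its preimage under Dmat
  set v : Fin (d + 1) → ℝ := Pi.single 0 1 - α • w with hv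
  have hvsum : ∑ i, v i = 0 := by
    have h1 : ∑ i, (Pi.single (0 : Fin (d+1)) (1:ℝ)) i = 1 := by
      simp
    have h2 : ∑ i, (α • w) i = α * β := by
      rw [hβdef, dotProduct]
      rw [Finset.mul_sum]
      apply Finset.sum_congr rfl
      intro i _
      simp [he]
    rw [hv]
    simp only [Pi.sub_apply, Finset.sum_sub_distrib, h1, h2, hα]
    rw [← hα, h2, hα, inv_mul_cancel₀ hβ.ne']
    norm_num
  obtain ⟨c, hc⟩ := Dmat_surj (by omega) v hvsum
  -- B *ᵥ c = u - α • (A *ᵥ w)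
  have hBc : B *ᵥ c = u - α • (A *ᵥ w) := by
    rw [hBD, ← Matrix.mulVec_mulVec, hc, hv, Matrix.mulVec_sub, ← huA,
      Matrix.mulVec_smul]
  -- M *ᵥ c = Bᵀ *ᵥ u
  have hMc : M *ᵥ c = Bᵀ *ᵥ u := by
    rw [hMdef, ← Matrix.mulVec_mulVec, hBc, Matrix.mulVec_sub, Matrix.mulVec_smul]
    have hz : Bᵀ *ᵥ (A *ᵥ w) = 0 := by
      have step : Bᵀ *ᵥ (A *ᵥ w) = (Dmat d)ᵀ *ᵥ (G *ᵥ w) := by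
        rw [hBD, Matrix.transpose_mul, ← Matrix.mulVec_mulVec,
          Matrix.mulVec_mulVec w Aᵀ A, ← hGdef]
      rw [step, hGw]
      exact Dmat_transpose_one
    rw [hz]
    simp
  have hsolve : M⁻¹ *ᵥ (Bᵀ *ᵥ u) = c := by
    rw [← hMc, Matrix.mulVec_mulVec, Matrix.nonsing_inv_mul _ hMdet, Matrix.one_mulVec]
  -- the residual
  have hrval : r = α • (A *ᵥ w) := by
    rw [hr, hsolve, hBc]
    abel
  -- norm computation
  have hnorm : ‖(EuclideanSpace.equiv (Fin N) ℝ).symm r‖ ^ 2 = r ⬝ᵥ r := by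
    rw [EuclideanSpace.norm_eq, Real.sq_sqrt (by positivity)]
    simp [dotProduct, Real.norm_eq_abs, sq_abs, sq]
  rw [hnorm, hrval]
  have hdot : (α • (A *ᵥ w)) ⬝ᵥ (α • (A *ᵥ w)) = α ^ 2 * ((A *ᵥ w) ⬝ᵥ (A *ᵥ w)) := by
    rw [smul_dotProduct, dotProduct_smul]
    simp [sq, smul_eq_mul]
    ring
  have hAwAw : (A *ᵥ w) ⬝ᵥ (A *ᵥ w) = β := by
    have h2 : w ⬝ᵥ (Aᵀ *ᵥ (A *ᵥ w)) = (A *ᵥ w) ⬝ᵥ (A *ᵥ w) := by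
      rw [Matrix.dotProduct_mulVec, Matrix.vecMul_transpose]
    rw [← h2, Matrix.mulVec_mulVec (w) Aᵀ A, ← hGdef, hGw, dotProduct_comm, ← hβdef]
  rw [hdot, hAwAw, hα]
  rw [one_div]
  field_simp
end

section
/- Let N ≥ 1, d ≥ 1 and let s₀, …, s_{d+1} ∈ ℝ^N. Assume the columns of ΔS are linearly independent (so that ΔSᵀΔS and (Δ²S)ᵀ(Δ²S) are invertible), and let r̃ = Δs₀ − Δ²S ((Δ²S)ᵀ Δ²S)⁻¹ (Δ²S)ᵀ Δs₀. If c ∈ ℝ^{d+1} satisfies (ΔSᵀΔS) c = e, where e = (1,…,1)ᵀ, then ‖r̃‖₂² · (∑_{i=0}^{d} cᵢ) = 1; that is, ‖r̃‖₂² equals λ := (∑_{i=0}^{d} cᵢ)⁻¹. -/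
open Matrix Finset

lemma d2s_li {N d : ℕ} (hd : 1 ≤ d) (s : Fin (d + 2) → Fin N → ℝ)
    (hfull : LinearIndependent ℝ (DS s)ᵀ) :
    LinearIndependent ℝ (D2S s)ᵀ := by
  obtain ⟨e, rfl⟩ : ∃ e, d = e + 1 := ⟨d - 1, (Nat.succ_pred_eq_of_pos hd).symm⟩
  replace hfull := Fintype.linearIndependent_iff.mp hfull
  refine Fintype.linearIndependent_iff.mpr ?_
  intro l hl
  set v : Fin (e + 2) → (Fin N → ℝ) := fun i => (DS s)ᵀ i with hv
  set g1 : Fin (e + 2) → ℝ := fun i => Fin.cases 0 l i with hg1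
  set g2 : Fin (e + 2) → ℝ := Fin.snoc l 0 with hg2
  have hw : ∀ j : Fin (e + 1), (D2S s)ᵀ j = v j.succ - v j.castSucc := by
    intro j; funext n
    simp [v, D2S, DS, forwardDiff]
  have e1 : ∑ i, g1 i • v i = ∑ j : Fin (e + 1), l j • v j.succ := by
    rw [Fin.sum_univ_succ]
    simp [hg1]
  have e2 : ∑ i, g2 i • v i = ∑ j : Fin (e + 1), l j • v j.castSucc := by
    rw [Fin.sum_univ_castSucc]
    simp [hg2]
  have key : ∀ i, g1 i = g2 i := by
    have h0 : ∑ i, (g1 i - g2 i) • v i = 0 := by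
      have hsplit : ∑ i, (g1 i - g2 i) • v i = (∑ i, g1 i • v i) - ∑ i, g2 i • v i := by
        simp [sub_smul, Finset.sum_sub_distrib]
      rw [hsplit, e1, e2, ← Finset.sum_sub_distrib, ← hl]
      exact Finset.sum_congr rfl fun j _ => by rw [hw j, smul_sub]
    intro i
    have := hfull _ h0 i
    linarith [this]
  intro j
  induction j using Fin.induction with
  | zero =>
    have h := key ((0 : Fin (e + 1)).castSucc)
    simp only [hg2, Fin.snoc_castSucc] at h
    rw [← h]
    simp [hg1]
  | succ i ih =>
    have h := key (i.castSucc.succ)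
    simp only [hg1, Fin.cases_succ] at h
    rw [Fin.succ_castSucc] at h
    simp only [hg2, Fin.snoc_castSucc] at h
    rw [← h, ih]


/-- If the columns of `ΔS` are linearly independent and `c` solves `(ΔSᵀ ΔS) c = e`
(`e = (1,…,1)ᵀ`), then the generalized residual
`r̃ = Δs₀ − Δ²S ((Δ²S)ᵀ Δ²S)⁻¹ (Δ²S)ᵀ Δs₀` satisfies `‖r̃‖₂² ⋅ (∑ᵢ cᵢ) = 1`, i.e.
`‖r̃‖₂² = λ := (∑ᵢ cᵢ)⁻¹`. -/
theorem rre_generalized_residual_norm_via_solution (N d : ℕ) (hN : 1 ≤ N) (hd : 1 ≤ d)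
    (s : Fin (d + 2) → Fin N → ℝ)
    (hfull : LinearIndependent ℝ (DS s)ᵀ)
    (r : Fin N → ℝ)
    (hr : r = forwardDiff s 0 -
      D2S s *ᵥ (((D2S s)ᵀ * D2S s)⁻¹ *ᵥ ((D2S s)ᵀ *ᵥ forwardDiff s 0)))
    (c : Fin (d + 1) → ℝ)
    (hc : ((DS s)ᵀ * DS s) *ᵥ c = fun _ => (1 : ℝ)) :
    ‖(EuclideanSpace.equiv (Fin N) ℝ).symm r‖ ^ 2 * (∑ i, c i) = 1 ∧
    ‖(EuclideanSpace.equiv (Fin N) ℝ).symm r‖ ^ 2 = (∑ i, c i)⁻¹ := by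
  set A := DS s with hA
  set B := D2S s with hB
  set H := Bᵀ * B with hH
  -- B has linearly independent columns, so H is invertible
  have hBli : LinearIndependent ℝ Bᵀ := d2s_li hd s hfull
  have hBinj : Function.Injective B.mulVec := Matrix.mulVec_injective_iff.mpr hBli
  have hHinj : Function.Injective H.mulVec := by
    intro x y hxy
    have h0 : H *ᵥ (x - y) = 0 := by rw [mulVec_sub, hxy, sub_self]
    have h1 : (B *ᵥ (x - y)) ⬝ᵥ (B *ᵥ (x - y)) = 0 := by
      have h1' : (x - y) ⬝ᵥ (H *ᵥ (x - y)) = 0 := by rw [h0, dotProduct_zero]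
      rwa [hH, ← mulVec_mulVec, dotProduct_mulVec, vecMul_transpose] at h1'
    have h2 : B *ᵥ (x - y) = 0 := dotProduct_self_eq_zero.mp h1
    have h3 : x - y = 0 := hBinj (by rw [h2, mulVec_zero])
    exact sub_eq_zero.mp h3
  have hHunit : IsUnit H := Matrix.mulVec_injective_iff_isUnit.mp hHinj
  have hHinv : H * H⁻¹ = 1 :=
    Matrix.mul_nonsing_inv _ ((Matrix.isUnit_iff_isUnit_det H).mp hHunit)
  -- Bᵀ r = 0
  have hBr : Bᵀ *ᵥ r = 0 := by
    rw [hr]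
    rw [mulVec_sub, mulVec_mulVec, mulVec_mulVec, ← hH, hHinv, Matrix.one_mulVec, sub_self]
  -- u := Aᵀ r is a constant vector
  set u : Fin (d + 1) → ℝ := Aᵀ *ᵥ r with hu
  have hstep : ∀ j : Fin d, u j.succ = u j.castSucc := by
    intro j
    have h0 := congrFun hBr j
    simp only [Matrix.mulVec, dotProduct, Matrix.transpose_apply, Pi.zero_apply] at h0 ⊢
    simp only [hB, D2S, Matrix.of_apply, sub_mul, Finset.sum_sub_distrib] at h0
    simp only [hu, Matrix.mulVec, dotProduct, Matrix.transpose_apply, hA, DS,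
      Matrix.of_apply]
    linarith [h0]
  have hconst : ∀ i, u i = u 0 := by
    intro i
    induction i using Fin.induction with
    | zero => rfl
    | succ j ih => rw [hstep j, ih]
  -- the weight vector w with r = A w and ∑ w = 1
  set z : Fin d → ℝ := H⁻¹ *ᵥ (Bᵀ *ᵥ forwardDiff s 0) with hz
  set w : Fin (d + 1) → ℝ :=
    fun i => (Pi.single 0 1 : Fin (d + 1) → ℝ) i -
      ((Fin.cases 0 z : Fin (d + 1) → ℝ) i - (Fin.snoc z 0 : Fin (d + 1) → ℝ) i) with hw
  have hAw : A *ᵥ w = r := by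
    funext n
    have hs1 : ∑ i, A n i * (Fin.cases 0 z : Fin (d + 1) → ℝ) i
        = ∑ j : Fin d, A n j.succ * z j := by
      rw [Fin.sum_univ_succ]; simp
    have hs2 : ∑ i, A n i * (Fin.snoc z 0 : Fin (d + 1) → ℝ) i = ∑ j : Fin d, A n j.castSucc * z j := by
      rw [Fin.sum_univ_castSucc]; simp
    have hs0 : ∑ i, A n i * (Pi.single 0 1 : Fin (d + 1) → ℝ) i = A n 0 := by
      simp [Pi.single_apply, mul_ite]
    have hBn : ∀ j : Fin d, B n j = A n j.succ - A n j.castSucc := by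
      intro j; simp [hB, hA, D2S, DS]
    have hrn : r n = forwardDiff s 0 n - ∑ j : Fin d, B n j * z j := by
      rw [hr]; simp [Matrix.mulVec, dotProduct]
    have hA0 : A n 0 = forwardDiff s 0 n := by simp [hA, DS]
    calc (A *ᵥ w) n = ∑ i, A n i * w i := rfl
      _ = (∑ i, A n i * (Pi.single 0 1 : Fin (d + 1) → ℝ) i)
            - ((∑ i, A n i * (Fin.cases 0 z : Fin (d + 1) → ℝ) i)
              - ∑ i, A n i * (Fin.snoc z 0 : Fin (d + 1) → ℝ) i) := by
          simp only [hw, mul_sub, Finset.sum_sub_distrib]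
      _ = A n 0 - ∑ j : Fin d, (A n j.succ - A n j.castSucc) * z j := by
          rw [hs0, hs1, hs2, ← Finset.sum_sub_distrib]
          simp only [sub_mul]
      _ = r n := by
          rw [hrn, hA0,
            Finset.sum_congr rfl (fun j (_ : j ∈ Finset.univ) => (hBn j).symm ▸
              rfl : ∀ j ∈ Finset.univ, (A n j.succ - A n j.castSucc) * z j = B n j * z j)]
  have hsumw : ∑ i, w i = 1 := by
    have t0 : ∑ i, (Pi.single 0 1 : Fin (d + 1) → ℝ) i = 1 := by
      simp [Pi.single_apply]
    have t1 : ∑ i, (Fin.cases 0 z : Fin (d + 1) → ℝ) i = ∑ j : Fin d, z j := by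
      rw [Fin.sum_univ_succ]; simp
    have t2 : ∑ i, (Fin.snoc z 0 : Fin (d + 1) → ℝ) i = ∑ j : Fin d, z j := by
      rw [Fin.sum_univ_castSucc]; simp
    simp only [hw, Finset.sum_sub_distrib, t0, t1, t2]
    ring
  -- norm squared equals u 0
  have hdot : r ⬝ᵥ r = u 0 := by
    have h1 : u ⬝ᵥ w = r ⬝ᵥ r := by
      rw [hu, mulVec_transpose, ← dotProduct_mulVec, hAw]
    rw [← h1]
    have : u ⬝ᵥ w = ∑ i, u 0 * w i := by
      refine Finset.sum_congr rfl fun i _ => by rw [hconst i]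
    rw [this, ← Finset.mul_sum, hsumw, mul_one]
  -- u 0 * ∑ c = 1
  have hkey : u 0 * ∑ i, c i = 1 := by
    have h1 : c ⬝ᵥ u = ∑ i, u 0 * c i := by
      refine Finset.sum_congr rfl fun i _ => by rw [hconst i]; ring
    have h2 : c ⬝ᵥ u = 1 := by
      rw [hu, dotProduct_mulVec, vecMul_transpose, ← hAw, dotProduct_mulVec,
        ← mulVec_transpose, mulVec_mulVec, hc]
      simp [dotProduct, hsumw]
    rw [h1, ← Finset.mul_sum] at h2
    exact h2
  have hnorm : ‖(EuclideanSpace.equiv (Fin N) ℝ).symm r‖ ^ 2 = r ⬝ᵥ r := by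
    rw [EuclideanSpace.norm_eq, Real.sq_sqrt (by positivity)]
    simp [dotProduct, sq]
  have hsum_ne : (∑ i, c i) ≠ 0 := by
    intro h0
    rw [h0, mul_zero] at hkey
    exact zero_ne_one hkey
  constructor
  · rw [hnorm, hdot]; exact hkey
  · rw [hnorm, hdot]
    exact eq_inv_of_mul_eq_one_left hkey
end

section
/- Let v ∈ ℝ^N and let A be a real N×m matrix (m ≥ 1) such that the N×(m+1) matrix B = [v | A] (first column v, remaining columns those of A) has linearly independent columns. With P = I_N − A(AᵀA)⁻¹Aᵀ, one has ‖P v‖₂² · ((BᵀB)⁻¹)₀₀ = 1, where ((BᵀB)⁻¹)₀₀ = e₁ᵀ(BᵀB)⁻¹e₁ is the top-left entry of (BᵀB)⁻¹; in particular ‖P v‖₂² = 1 / (e₁ᵀ(BᵀB)⁻¹e₁). -/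
open Matrix Finset

/-- The `N × (m+1)` matrix `B = [v | A]` whose first column is `v` and whose remaining
columns are those of `A`. -/
def augMat {N m : ℕ} (v : Fin N → ℝ) (A : Matrix (Fin N) (Fin m) ℝ) :
    Matrix (Fin N) (Fin (m + 1)) ℝ :=
  Matrix.of fun i => Fin.cons (v i) (fun j => A i j)

lemma mulVec_eq_zero_of_li {N k : ℕ} {C : Matrix (Fin N) (Fin k) ℝ}
    (h : LinearIndependent ℝ Cᵀ) {x : Fin k → ℝ} (hx : C *ᵥ x = 0) : x = 0 := by
  have hs : ∀ j, x j = 0 := by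
    apply Fintype.linearIndependent_iff.mp h x
    funext i
    have h1 : (∑ j, x j • Cᵀ j) i = (C *ᵥ x) i := by
      simp [Matrix.mulVec, dotProduct, mul_comm]
    rw [hx] at h1
    simpa using h1
  funext j; exact hs j

/-- A real matrix with linearly independent columns has invertible Gram matrix. -/
lemma isUnit_gram {N k : ℕ} (C : Matrix (Fin N) (Fin k) ℝ)
    (h : LinearIndependent ℝ Cᵀ) : IsUnit (Cᵀ * C) := by
  rw [← Matrix.mulVec_injective_iff_isUnit]
  intro x y hxy
  have hsub : (Cᵀ * C) *ᵥ (x - y) = 0 := by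
    rw [Matrix.mulVec_sub, hxy, sub_self]
  have hCx : C *ᵥ (x - y) = 0 := by
    have h0 : (x - y) ⬝ᵥ ((Cᵀ * C) *ᵥ (x - y)) = 0 := by rw [hsub]; simp
    rw [← Matrix.mulVec_mulVec, dotProduct_mulVec, Matrix.vecMul_transpose] at h0
    exact dotProduct_self_eq_zero.mp h0
  exact sub_eq_zero.mp (mulVec_eq_zero_of_li h hCx)

/-- If the columns of `B = [v | A]` are linearly independent and `P = I − A(AᵀA)⁻¹Aᵀ`, then
`‖P v‖₂² ⋅ ((BᵀB)⁻¹)₀₀ = 1`, where `((BᵀB)⁻¹)₀₀ = e₁ᵀ (BᵀB)⁻¹ e₁`; in particular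
`‖P v‖₂² = 1 / (e₁ᵀ (BᵀB)⁻¹ e₁)`. -/
theorem norm_sq_proj_eq_inv_entry (N m : ℕ) (hm : 1 ≤ m)
    (v : Fin N → ℝ) (A : Matrix (Fin N) (Fin m) ℝ)
    (hB : LinearIndependent ℝ (augMat v A)ᵀ)
    (P : Matrix (Fin N) (Fin N) ℝ)
    (hP : P = 1 - A * (Aᵀ * A)⁻¹ * Aᵀ) :
    ‖(EuclideanSpace.equiv (Fin N) ℝ).symm (P *ᵥ v)‖ ^ 2 *
        (((augMat v A)ᵀ * augMat v A)⁻¹ 0 0) = 1 ∧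
    (((augMat v A)ᵀ * augMat v A)⁻¹ 0 0) =
        Pi.single (0 : Fin (m + 1)) (1 : ℝ) ⬝ᵥ
          (((augMat v A)ᵀ * augMat v A)⁻¹ *ᵥ Pi.single (0 : Fin (m + 1)) (1 : ℝ)) ∧
    ‖(EuclideanSpace.equiv (Fin N) ℝ).symm (P *ᵥ v)‖ ^ 2 =
      1 / (Pi.single (0 : Fin (m + 1)) (1 : ℝ) ⬝ᵥ
          (((augMat v A)ᵀ * augMat v A)⁻¹ *ᵥ Pi.single (0 : Fin (m + 1)) (1 : ℝ))) := by
  set B := augMat v A with hBdef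
  set G := Bᵀ * B with hGdef
  -- columns of A are linearly independent
  have hAli : LinearIndependent ℝ Aᵀ := by
    have h1 := hB.comp Fin.succ (Fin.succ_injective m)
    have h2 : Bᵀ ∘ Fin.succ = Aᵀ := by
      funext j i
      show Bᵀ (Fin.succ j) i = A i j
      simp [hBdef, augMat, Matrix.transpose_apply, Function.comp_apply, Matrix.of_apply]
    rwa [h2] at h1
  have hAUnit : IsUnit (Aᵀ * A) := isUnit_gram A hAli
  have hGUnit : IsUnit G := isUnit_gram B hB
  have hAdet : IsUnit (Aᵀ * A).det := (Matrix.isUnit_iff_isUnit_det _).mp hAUnit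
  have hGdet : IsUnit G.det := (Matrix.isUnit_iff_isUnit_det _).mp hGUnit
  have hAInv : (Aᵀ * A) * (Aᵀ * A)⁻¹ = 1 := Matrix.mul_nonsing_inv _ hAdet
  -- Aᵀ annihilates P
  have hATP : Aᵀ * P = 0 := by
    rw [hP, Matrix.mul_sub, Matrix.mul_one]
    have : Aᵀ * (A * (Aᵀ * A)⁻¹ * Aᵀ) = ((Aᵀ * A) * (Aᵀ * A)⁻¹) * Aᵀ := by
      simp only [Matrix.mul_assoc]
    rw [this, hAInv, Matrix.one_mul, sub_self]
  -- P is symmetric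
  have hPsymm : Pᵀ = P := by
    rw [hP]
    simp only [Matrix.transpose_sub, Matrix.transpose_one, Matrix.transpose_mul,
      Matrix.transpose_transpose, Matrix.transpose_nonsing_inv, Matrix.transpose_mul,
      Matrix.transpose_transpose, Matrix.mul_assoc]
  -- P is idempotent
  have hPP : P * P = P := by
    nth_rewrite 1 [hP]
    rw [Matrix.sub_mul, Matrix.one_mul]
    have : A * (Aᵀ * A)⁻¹ * Aᵀ * P = A * (Aᵀ * A)⁻¹ * (Aᵀ * P) := by
      simp only [Matrix.mul_assoc]
    rw [this, hATP, Matrix.mul_zero, sub_zero]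
  set w := P *ᵥ v with hwdef
  set s := w ⬝ᵥ w with hsdef
  -- v ⬝ w = s
  have hvw : v ⬝ᵥ w = s := by
    have h1 : Pᵀ *ᵥ w = w := by rw [hPsymm, hwdef, Matrix.mulVec_mulVec, hPP]
    calc v ⬝ᵥ w = w ⬝ᵥ v := dotProduct_comm _ _
      _ = (Pᵀ *ᵥ w) ⬝ᵥ v := by rw [h1]
      _ = w ⬝ᵥ (P *ᵥ v) := by
          rw [Matrix.mulVec_transpose, ← dotProduct_mulVec]
      _ = s := rfl
  -- Aᵀ w = 0
  have hAtw : Aᵀ *ᵥ w = 0 := by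
    rw [hwdef, Matrix.mulVec_mulVec, hATP, Matrix.zero_mulVec]
  -- Bᵀ w = s • e₀
  have hBtw : Bᵀ *ᵥ w = s • (Pi.single 0 1 : Fin (m + 1) → ℝ) := by
    funext k
    refine Fin.cases ?_ (fun j => ?_) k
    · have : (Bᵀ *ᵥ w) 0 = v ⬝ᵥ w := by
        simp [Matrix.mulVec, hBdef, augMat, dotProduct]
      rw [this, hvw]; simp
    · have h1 : (Bᵀ *ᵥ w) j.succ = (Aᵀ *ᵥ w) j := by
        simp [Matrix.mulVec, hBdef, augMat, dotProduct]
      rw [h1, hAtw]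
      simp [Pi.single_apply, Fin.succ_ne_zero]
  -- the preimage vector u
  set u : Fin (m + 1) → ℝ := Fin.cons 1 (-(((Aᵀ * A)⁻¹ * Aᵀ) *ᵥ v)) with hudef
  have hBu : B *ᵥ u = w := by
    funext i
    have hlhs : (B *ᵥ u) i
        = v i * 1 + ∑ j, A i j * (-(((Aᵀ * A)⁻¹ * Aᵀ) *ᵥ v)) j := by
      simp [Matrix.mulVec, dotProduct, hBdef, augMat, hudef, Fin.sum_univ_succ]
    have hrhs : w i = v i - (A *ᵥ (((Aᵀ * A)⁻¹ * Aᵀ) *ᵥ v)) i := by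
      rw [hwdef, hP, Matrix.sub_mulVec, Matrix.one_mulVec]
      simp [Matrix.mulVec_mulVec, Matrix.mul_assoc]
    rw [hlhs, hrhs]
    simp [Matrix.mulVec, dotProduct, sub_eq_add_neg, Finset.sum_neg_distrib]
  -- G u = s • e₀
  have hGu : G *ᵥ u = s • (Pi.single 0 1 : Fin (m + 1) → ℝ) := by
    rw [hGdef, ← Matrix.mulVec_mulVec, hBu, hBtw]
  -- s ≠ 0
  have hs0 : s ≠ 0 := by
    intro h0
    have hw0 : w = 0 := dotProduct_self_eq_zero.mp (hsdef ▸ h0)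
    have hBu0 : B *ᵥ u = 0 := by rw [hBu, hw0]
    have := mulVec_eq_zero_of_li hB hBu0
    have h1 : u 0 = 0 := by rw [this]; rfl
    rw [hudef] at h1
    simp at h1
  -- G⁻¹ e₀ = s⁻¹ • u
  have hGinv : G⁻¹ *ᵥ Pi.single (0 : Fin (m + 1)) (1 : ℝ) = s⁻¹ • u := by
    have h1 : G⁻¹ *ᵥ (G *ᵥ u) = u := by
      rw [Matrix.mulVec_mulVec, Matrix.nonsing_inv_mul _ hGdet, Matrix.one_mulVec]
    rw [hGu, Matrix.mulVec_smul] at h1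
    rw [← h1, smul_smul, inv_mul_cancel₀ hs0, one_smul]
  -- entry computations
  have hG00 : G⁻¹ 0 0 = s⁻¹ := by
    have h1 : (G⁻¹ *ᵥ Pi.single (0 : Fin (m + 1)) (1 : ℝ)) 0 = G⁻¹ 0 0 := by
      rw [Matrix.mulVec_single]; simp
    rw [hGinv] at h1
    rw [← h1, hudef]
    simp
  have hdot : Pi.single (0 : Fin (m + 1)) (1 : ℝ) ⬝ᵥ
      (G⁻¹ *ᵥ Pi.single (0 : Fin (m + 1)) (1 : ℝ)) = G⁻¹ 0 0 := by
    rw [single_dotProduct, Matrix.mulVec_single]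
    simp
  -- the norm
  have hnorm : ‖(EuclideanSpace.equiv (Fin N) ℝ).symm w‖ ^ 2 = s := by
    rw [EuclideanSpace.norm_eq, Real.sq_sqrt (by positivity)]
    simp [hsdef, dotProduct, Real.norm_eq_abs, sq_abs, pow_two]
  refine ⟨?_, hdot.symm, ?_⟩
  · rw [hnorm, hG00, mul_inv_cancel₀ hs0]
  · rw [hnorm, hdot, hG00, one_div, inv_inv]
end
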